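/- arXiv:1602.08928 — 7 statements merged into one kernel-verified Lean document; each statement's English description precedes it below -/
import Mathlib

section
/- Let G be a locally compact second countable group. For compact K ⊆ G and identity neighbourhood V define U_{K,V} = {(P,Q) ∈ C(G) × C(G) : ∃ t ∈ V, P ∩ K = tQ ∩ K}. Then the family {U_{K,V} : K compact, V ∈ 𝔘(G)} is a fundamental system of entourages for a uniformity on the set C(G) of closed subsets of G. That is: each U_{K,V} contains the diagonal; the family is a filter base; for each U_{K,V} there is a member contained in its inverse; and for each U_{K,V} there is a member whose composition with itself lies in U_{K,V}. -/
/-!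
An equation `P ∩ K = tQ ∩ K` survives shrinking the window `K`, and translating it by `t⁻¹`
turns it into `t⁻¹P ∩ t⁻¹K = Q ∩ t⁻¹K`. Hence, for a compact identity neighbourhood `C`,
widening the window to `CK` lets one invert the translation, and widening it to `K ∪ C⁻¹K`
lets one compose two translations `t, s ∈ C` into `ts ∈ CC`. Local compactness makes these
wider windows compact.
-/

open Pointwise Topology Filter

variable (G : Type*) [Group G] [TopologicalSpace G] [IsTopologicalGroup G]

/-- The space `C(G)` of closed subsets of `G`. -/
def ClosedSets := {C : Set G // IsClosed C}

/-- The entourage `U_{K,V} = {(P,Q) | ∃ t ∈ V, P ∩ K = tQ ∩ K}`. -/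
def locEnt (K V : Set G) : Set (ClosedSets G × ClosedSets G) :=
  {PQ | ∃ t ∈ V, PQ.1.1 ∩ K = (t • PQ.2.1) ∩ K}

theorem Set.inter_eq_inter_of_subset {α : Type*} {A B S T : Set α} (h : A ∩ S = B ∩ S)
    (hT : T ⊆ S) : A ∩ T = B ∩ T := by
  rw [← Set.inter_eq_right.mpr hT, ← Set.inter_assoc, h, Set.inter_assoc]

theorem inter_eq_smul_inter_iff {G α : Type*} [Group G] [MulAction G α] (t : G)
    (A B K : Set α) : A ∩ K = t • B ∩ K ↔ t⁻¹ • A ∩ t⁻¹ • K = B ∩ t⁻¹ • K := by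
  conv_rhs => rw [← inv_smul_smul t (B ∩ t⁻¹ • K), Set.smul_set_inter (a := t), smul_inv_smul,
    ← Set.smul_set_inter]
  exact (MulAction.injective t⁻¹).eq_iff.symm

section locEnt

variable {H : Type*} [Group H] [TopologicalSpace H]

theorem locEnt_mono {K K' V V' : Set H} (hK : K ⊆ K') (hV : V' ⊆ V) :
    locEnt H K' V' ⊆ locEnt H K V := by
  rintro ⟨P, Q⟩ ⟨t, ht, hPQ⟩
  exact ⟨t, hV ht, Set.inter_eq_inter_of_subset hPQ hK⟩

theorem id_subset_locEnt {K V : Set H} (hV : (1 : H) ∈ V) : SetRel.id ⊆ locEnt H K V := by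
  rintro ⟨P, Q⟩ rfl
  exact ⟨1, hV, by rw [one_smul]⟩

theorem locEnt_subset_swap_image {K K' V : Set H} (hK : V * K ⊆ K') :
    locEnt H K' V ⊆ Prod.swap '' locEnt H K V⁻¹ := by
  rintro ⟨P, Q⟩ ⟨t, ht, hPQ⟩
  have hPQ' : P.1 ∩ t • K = t • Q.1 ∩ t • K :=
    Set.inter_eq_inter_of_subset hPQ ((Set.smul_set_subset_smul ht).trans hK)
  have hQP := ((inter_eq_smul_inter_iff t _ _ _).mp hPQ').symm
  rw [inv_smul_smul] at hQP
  exact ⟨(Q, P), ⟨t⁻¹, Set.inv_mem_inv.mpr ht, hQP⟩, rfl⟩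

theorem comp_locEnt_subset {K K₁ K₂ V₁ V₂ : Set H} (hK₁ : K ⊆ K₁) (hK₂ : V₁⁻¹ * K ⊆ K₂) :
    SetRel.comp (locEnt H K₁ V₁) (locEnt H K₂ V₂) ⊆ locEnt H K (V₁ * V₂) := by
  rintro ⟨P, R⟩ ⟨Q, ⟨t, ht, hPQ⟩, ⟨s, hs, hQR⟩⟩
  refine ⟨t * s, Set.mul_mem_mul ht hs, ?_⟩
  have hQ : t⁻¹ • P.1 ∩ t⁻¹ • K = Q.1 ∩ t⁻¹ • K :=
    (inter_eq_smul_inter_iff t _ _ _).mp (Set.inter_eq_inter_of_subset hPQ hK₁)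
  have hR : Q.1 ∩ t⁻¹ • K = s • R.1 ∩ t⁻¹ • K :=
    Set.inter_eq_inter_of_subset hQR
      ((Set.smul_set_subset_smul (Set.inv_mem_inv.mpr ht)).trans hK₂)
  rw [mul_smul]
  exact (inter_eq_smul_inter_iff t _ _ _).mpr (hQ.trans hR)

end locEnt

theorem locEnt_fundamental_system
    [LocallyCompactSpace G] :
    (∀ K V : Set G, IsCompact K → V ∈ 𝓝 (1 : G) → SetRel.id ⊆ locEnt G K V) ∧
    (∀ K₁ V₁ K₂ V₂ : Set G, IsCompact K₁ → V₁ ∈ 𝓝 (1 : G) →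
      IsCompact K₂ → V₂ ∈ 𝓝 (1 : G) →
      ∃ K₃ V₃ : Set G, IsCompact K₃ ∧ V₃ ∈ 𝓝 (1 : G) ∧
        locEnt G K₃ V₃ ⊆ locEnt G K₁ V₁ ∩ locEnt G K₂ V₂) ∧
    (∀ K V : Set G, IsCompact K → V ∈ 𝓝 (1 : G) →
      ∃ K' V' : Set G, IsCompact K' ∧ V' ∈ 𝓝 (1 : G) ∧
        locEnt G K' V' ⊆ Prod.swap '' locEnt G K V) ∧
    (∀ K V : Set G, IsCompact K → V ∈ 𝓝 (1 : G) →
      ∃ K' V' : Set G, IsCompact K' ∧ V' ∈ 𝓝 (1 : G) ∧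
        SetRel.comp (locEnt G K' V') (locEnt G K' V') ⊆ locEnt G K V) := by
  refine ⟨fun K V _ hV => id_subset_locEnt (mem_of_mem_nhds hV), ?_, ?_, ?_⟩
  · intro K₁ V₁ K₂ V₂ hK₁ hV₁ hK₂ hV₂
    exact ⟨K₁ ∪ K₂, V₁ ∩ V₂, hK₁.union hK₂, inter_mem hV₁ hV₂, Set.subset_inter
      (locEnt_mono Set.subset_union_left Set.inter_subset_left)
      (locEnt_mono Set.subset_union_right Set.inter_subset_right)⟩
  · intro K V hK hV
    obtain ⟨C, hC, hCV, hCc⟩ := local_compact_nhds (inv_mem_nhds_one G hV)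
    refine ⟨C * K, C, hCc.mul hK, hC, (locEnt_subset_swap_image subset_rfl).trans ?_⟩
    exact Set.image_mono (locEnt_mono subset_rfl (Set.inv_subset.mpr hCV))
  · intro K V hK hV
    obtain ⟨W, hWo, hW, hWV⟩ := exists_open_nhds_one_mul_subset hV
    obtain ⟨C, hC, hCW, hCc⟩ := local_compact_nhds (hWo.mem_nhds hW)
    refine ⟨K ∪ C⁻¹ * K, C, hK.union (hCc.inv.mul hK), hC, ?_⟩
    exact (comp_locEnt_subset Set.subset_union_left Set.subset_union_right).trans
      (locEnt_mono subset_rfl ((Set.mul_subset_mul hCW hCW).trans hWV))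
end

section
/- Let G be a locally compact second countable group and equip the set C(G) of closed subsets of G with the local topology, in which a neighbourhood basis of P is given by the sets U_{K,V}(P) = {Q closed : ∃ t ∈ V, tQ ∩ K = P ∩ K} for K compact and V an identity neighbourhood. Then the left-translation action G × C(G) → C(G), (g,P) ↦ gP, is jointly continuous. -/
open Pointwise Topology Filter

variable (G : Type*) [Group G] [TopologicalSpace G] [IsTopologicalGroup G]

/-- The local topology on `C(G)`: a set is open iff around each of its points `P` it
contains a basic neighbourhood `U_{K,V}(P) = {Q | ∃ t ∈ V, tQ ∩ K = P ∩ K}` with `K`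
compact and `V` an identity neighbourhood. -/
def locTop : TopologicalSpace (ClosedSets G) where
  IsOpen S := ∀ P ∈ S, ∃ K V : Set G, IsCompact K ∧ V ∈ 𝓝 (1 : G) ∧
    {Q : ClosedSets G | ∃ t ∈ V, (t • Q.1) ∩ K = P.1 ∩ K} ⊆ S
  isOpen_univ := fun P _ =>
    ⟨∅, Set.univ, isCompact_empty, Filter.univ_mem, fun _ _ => trivial⟩
  isOpen_inter := by
    intro S₁ S₂ h₁ h₂ P hP
    obtain ⟨K₁, V₁, hK₁, hV₁, hsub₁⟩ := h₁ P hP.1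
    obtain ⟨K₂, V₂, hK₂, hV₂, hsub₂⟩ := h₂ P hP.2
    refine ⟨K₁ ∪ K₂, V₁ ∩ V₂, hK₁.union hK₂, Filter.inter_mem hV₁ hV₂, ?_⟩
    have e : ∀ (A : Set G) (K : Set G), K ⊆ K₁ ∪ K₂ →
        A ∩ (K₁ ∪ K₂) ∩ K = A ∩ K := by
      intro A K hK
      rw [Set.inter_assoc, Set.inter_eq_right.2 hK]
    rintro Q ⟨t, htV, ht⟩
    constructor
    · exact hsub₁ ⟨t, htV.1, by
        rw [← e (t • Q.1) K₁ Set.subset_union_left, ht,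
          e P.1 K₁ Set.subset_union_left]⟩
    · exact hsub₂ ⟨t, htV.2, by
        rw [← e (t • Q.1) K₂ Set.subset_union_right, ht,
          e P.1 K₂ Set.subset_union_right]⟩
  isOpen_sUnion := by
    intro 𝒮 h P hP
    obtain ⟨s, hs, hPs⟩ := hP
    obtain ⟨K, V, hK, hV, hsub⟩ := h s hs P hPs
    exact ⟨K, V, hK, hV, fun Q hQ => ⟨s, hs, hsub hQ⟩⟩

/-- Left translation on closed subsets. -/
noncomputable def transL (g : G) (C : ClosedSets G) : ClosedSets G :=
  ⟨g • C.1, by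
    have e : g • C.1 = (Homeomorph.mulLeft g) '' C.1 := by
      ext x
      constructor
      · rintro ⟨y, hy, rfl⟩; exact ⟨y, hy, rfl⟩
      · rintro ⟨y, hy, rfl⟩; exact ⟨y, hy, rfl⟩
    rw [e]
    exact (Homeomorph.mulLeft g).isClosedMap _ C.2⟩

theorem smul_set_inter_eq_smul_set_inter_iff {α β : Type*} [Group α] [MulAction α β]
    (g : α) (A B K : Set β) :
    g • A ∩ K = g • B ∩ K ↔ A ∩ g⁻¹ • K = B ∩ g⁻¹ • K := by
  have key : ∀ C : Set β, g • C ∩ K = g • (C ∩ g⁻¹ • K) := fun C => by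
    rw [Set.smul_set_inter, smul_inv_smul]
  rw [key, key, smul_left_cancel_iff]

section LocalNeighbourhoods

variable {G}

attribute [local instance] locTop

/-- The basic neighbourhood `U_{K,V}(P)` of the local topology. -/
def locNbhd (K V : Set G) (P : ClosedSets G) : Set (ClosedSets G) :=
  {Q | ∃ t ∈ V, t • Q.1 ∩ K = P.1 ∩ K}

theorem isOpen_locNbhd {K V : Set G} (hK : IsCompact K) (hV : IsOpen V) (P : ClosedSets G) :
    IsOpen (locNbhd K V P) := by
  rintro Q ⟨t, htV, ht⟩
  refine ⟨t⁻¹ • K, (t * ·) ⁻¹' V, hK.smul t⁻¹,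
    (hV.preimage (continuous_const_mul t)).mem_nhds (by simpa using htV), ?_⟩
  rintro R ⟨s, hsV, hs⟩
  refine ⟨t * s, hsV, ?_⟩
  rw [mul_smul, (smul_set_inter_eq_smul_set_inter_iff t _ _ K).2 hs, ht]

/-- The witness `g t h⁻¹` moves `hQ` onto `g(tQ)`, and it lies in `V` once `h` is close to
`g` and `t` close to `1`. -/
theorem transL_preimage_locNbhd_mem_nhds {K V : Set G} (hK : IsCompact K) (hV : V ∈ 𝓝 (1 : G))
    (g : G) (P : ClosedSets G) :
    (fun p : G × ClosedSets G => transL G p.1 p.2) ⁻¹' locNbhd K V (transL G g P)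
      ∈ 𝓝 (g, P) := by
  have hwitness : (fun p : G × G => g * p.2 * p.1⁻¹) ⁻¹' V ∈ 𝓝 (g, 1) :=
    (by fun_prop : Continuous fun p : G × G => g * p.2 * p.1⁻¹).continuousAt.preimage_mem_nhds
      (by simpa using hV)
  obtain ⟨H, W, hH, hgH, hW, h1W, hHW⟩ := mem_nhds_prod_iff'.1 hwitness
  refine mem_of_superset (prod_mem_nhds (hH.mem_nhds hgH)
    ((isOpen_locNbhd (hK.smul g⁻¹) hW P).mem_nhds ⟨1, h1W, by rw [one_smul]⟩)) ?_
  rintro ⟨h, Q⟩ ⟨hh, t, htW, ht⟩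
  refine ⟨g * t * h⁻¹, hHW (Set.mk_mem_prod hh htW), ?_⟩
  change (g * t * h⁻¹) • h • Q.1 ∩ K = g • P.1 ∩ K
  rw [smul_smul, inv_mul_cancel_right, mul_smul,
    (smul_set_inter_eq_smul_set_inter_iff g _ _ K).2 ht]

end LocalNeighbourhoods

theorem locTop_action_continuous :
    letI : TopologicalSpace (ClosedSets G) := locTop G
    Continuous (fun p : G × ClosedSets G => transL G p.1 p.2) := by
  let _ : TopologicalSpace (ClosedSets G) := locTop G
  refine continuous_def.2 fun S hS => isOpen_iff_mem_nhds.2 ?_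
  rintro ⟨g, P⟩ hgP
  obtain ⟨K, V, hK, hV, hsub⟩ := hS _ hgP
  exact mem_of_superset (transL_preimage_locNbhd_mem_nhds hK hV g P) fun _ hp => hsub hp
end

section
/- Let G be a locally compact second countable group. The identity map from C(G) equipped with the local topology to C(G) equipped with the Chabauty–Fell topology is continuous; i.e., the local topology is finer than the Chabauty–Fell topology. -/
open Pointwise Topology Filter

variable (G : Type*) [Group G] [TopologicalSpace G] [IsTopologicalGroup G]

/-- The Chabauty–Fell topology on `C(G)`. -/
def chabautyFell : TopologicalSpace (ClosedSets G) :=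
  TopologicalSpace.generateFrom
    ({S | ∃ V : Set G, IsOpen V ∧ S = {C : ClosedSets G | (C.1 ∩ V).Nonempty}} ∪
     {S | ∃ K : Set G, IsCompact K ∧ S = {C : ClosedSets G | C.1 ∩ K = ∅}})

/-! Both kinds of Chabauty–Fell subbasic sets are open in the local topology. If `P` meets an
open `V` at `x`, it suffices to control `Q` on `K = {x}`: a translate `tQ` agreeing with `P` there
contains `x`, so `Q` meets `V` at `t⁻¹x` once `t` is close to `1`. If `P` misses a compact `K`,
choose an identity neighbourhood `V` with `VK ∩ P = ∅` and a compact identity neighbourhood `W`,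
and control `Q` on the compact set `WK`: a point `q ∈ Q ∩ K` would give `tq ∈ tQ ∩ WK ⊆ P`
with `tq ∈ VK` for `t ∈ W ∩ V`. -/

section

variable {G}

theorem isOpen_locTop_setOf_inter_nonempty {V : Set G} (hV : IsOpen V) :
    IsOpen[locTop G] {C : ClosedSets G | (C.1 ∩ V).Nonempty} := by
  rintro P ⟨x, hxP, hxV⟩
  have hnhds : {t : G | t⁻¹ * x ∈ V} ∈ 𝓝 (1 : G) :=
    (continuous_inv.mul continuous_const).continuousAt.preimage_mem_nhds
      (hV.mem_nhds (by simpa using hxV))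
  refine ⟨{x}, _, isCompact_singleton, hnhds, ?_⟩
  rintro Q ⟨t, htV, ht⟩
  obtain ⟨q, hqQ, rfl⟩ : x ∈ t • Q.1 := (ht.symm ▸ ⟨hxP, rfl⟩ : x ∈ t • Q.1 ∩ {x}).1
  exact ⟨q, hqQ, by simpa [smul_eq_mul] using htV⟩

theorem isOpen_locTop_setOf_inter_eq_empty [WeaklyLocallyCompactSpace G] {K : Set G}
    (hK : IsCompact K) : IsOpen[locTop G] {C : ClosedSets G | C.1 ∩ K = ∅} := by
  intro P hP
  obtain ⟨W, hWc, hW⟩ := exists_compact_mem_nhds (1 : G)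
  have hKP : K ⊆ P.1ᶜ := fun k hk hkP => (hP ▸ ⟨hkP, hk⟩ : k ∈ (∅ : Set G))
  obtain ⟨V, hV, hVK⟩ := compact_open_separated_mul_left hK P.2.isOpen_compl hKP
  refine ⟨W * K, W ∩ V, hWc.mul hK, inter_mem hW hV, ?_⟩
  rintro Q ⟨t, ⟨htW, htV⟩, ht⟩
  refine Set.eq_empty_of_forall_notMem fun q ⟨hqQ, hqK⟩ => ?_
  have htq : t * q ∈ P.1 ∩ (W * K) := ht ▸ ⟨⟨q, hqQ, rfl⟩, Set.mul_mem_mul htW hqK⟩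
  exact hVK (Set.mul_mem_mul htV hqK) htq.1

end

theorem locTop_finer_chabautyFell
    [LocallyCompactSpace G] :
    @Continuous (ClosedSets G) (ClosedSets G) (locTop G) (chabautyFell G) id := by
  rw [@continuous_id_iff_le _ (locTop G) (chabautyFell G)]
  refine le_generateFrom ?_
  rintro s (⟨V, hV, rfl⟩ | ⟨K, hK, rfl⟩)
  · exact isOpen_locTop_setOf_inter_nonempty hV
  · exact isOpen_locTop_setOf_inter_eq_empty hK
end

section
/- Let G be a locally compact second countable group and P₀ ⊆ G a set of finite local complexity. Then for every P in the Chabauty–Fell orbit closure X of P₀ under left translations, one has P⁻¹P ⊆ P₀⁻¹P₀. In particular every element of X has finite local complexity, and if Γ_G is the subgroup of G generated by P₀, then for every P ∈ X and every p ∈ P one has p⁻¹P ⊆ Γ_G. -/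
open Pointwise Topology Filter

variable (G : Type*) [Group G] [TopologicalSpace G] [IsTopologicalGroup G]

/-! The condition `C⁻¹C ⊆ D`, for a closed `D`, is closed in the Chabauty–Fell topology: if
`a⁻¹b ∉ D` with `a, b ∈ C`, then every closed set meeting small neighbourhoods of `a` and `b`
also violates it, and "meeting an open set" is a sub-basic open condition. Left translation does
not change `P₀⁻¹P₀`, so the whole orbit closure satisfies `P⁻¹P ⊆ P₀⁻¹P₀`, and any subset of a
closed discrete set is again closed and discrete. -/

theorem IsClosed.of_subset_of_discreteTopology {X : Type*} [TopologicalSpace X] {s t : Set X}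
    (hs : IsClosed s) [DiscreteTopology s] (hts : t ⊆ s) : IsClosed t := by
  simpa [Set.inter_eq_self_of_subset_right hts] using
    hs.inter_preimage_val_iff.mp (isClosed_discrete (Subtype.val ⁻¹' t : Set s))

theorem Set.inv_mul_subset_subgroupClosure {M : Type*} [Group M] (s : Set M) :
    s⁻¹ * s ⊆ Subgroup.closure s := by
  rintro _ ⟨a, ha, b, hb, rfl⟩
  exact mul_mem (inv_mem_iff.mp (Subgroup.subset_closure ha)) (Subgroup.subset_closure hb)

theorem Set.inv_mul_smul_set_self {M : Type*} [Group M] (g : M) (s : Set M) :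
    (g • s)⁻¹ * (g • s) = s⁻¹ * s := by
  rw [Set.inv_smul_set_distrib, Set.op_smul_set_mul_eq_mul_smul_set, inv_smul_smul]

namespace ClosedSets

theorem isOpen_setOf_inter_nonempty {G : Type*} [TopologicalSpace G] {V : Set G}
    (hV : IsOpen V) :
    IsOpen[chabautyFell G] {C : ClosedSets G | (C.1 ∩ V).Nonempty} :=
  .basic _ (.inl ⟨V, hV, rfl⟩)

variable {G}

theorem isClosed_setOf_inv_mul_subset {D : Set G} (hD : IsClosed D) :
    IsClosed[chabautyFell G] {C : ClosedSets G | C.1⁻¹ * C.1 ⊆ D} := by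
  let := chabautyFell G
  rw [← isOpen_compl_iff, isOpen_iff_forall_mem_open]
  intro C hC
  obtain ⟨_, ⟨a, ha, b, hb, rfl⟩, hab⟩ := Set.not_subset.mp hC
  have hopen : IsOpen ((fun z : G × G => z.1⁻¹ * z.2) ⁻¹' Dᶜ) :=
    hD.isOpen_compl.preimage (by fun_prop)
  obtain ⟨V₁, V₂, hV₁, hV₂, ha₁, hb₂, hV⟩ :=
    isOpen_prod_iff.mp hopen a⁻¹ b (by simpa using hab)
  refine ⟨{C | (C.1 ∩ V₁).Nonempty} ∩ {C | (C.1 ∩ V₂).Nonempty}, ?_,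
    (isOpen_setOf_inter_nonempty hV₁).inter (isOpen_setOf_inter_nonempty hV₂),
    ⟨a⁻¹, ha, ha₁⟩, b, hb, hb₂⟩
  rintro C' ⟨⟨c, hc, hc₁⟩, d, hd, hd₂⟩ hC'
  exact hV (Set.mk_mem_prod hc₁ hd₂) (hC' (Set.mul_mem_mul (Set.inv_mem_inv.mpr hc) hd))

end ClosedSets

theorem orbit_closure_flc
    (P₀ : Set G) (h₀c : IsClosed (P₀⁻¹ * P₀)) (h₀d : DiscreteTopology ↥(P₀⁻¹ * P₀))
    (P : ClosedSets G)
    (hP : P ∈ @closure _ (chabautyFell G) {Q : ClosedSets G | ∃ g : G, Q.1 = g • P₀}) :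
    ((P.1)⁻¹ * P.1 ⊆ P₀⁻¹ * P₀) ∧
    (IsClosed ((P.1)⁻¹ * P.1) ∧ DiscreteTopology ↥((P.1)⁻¹ * P.1)) ∧
    (∀ p ∈ P.1, p⁻¹ • P.1 ⊆ (Subgroup.closure P₀ : Set G)) := by
  have hsub : (P.1)⁻¹ * P.1 ⊆ P₀⁻¹ * P₀ := by
    let := chabautyFell G
    refine closure_minimal ?_ (ClosedSets.isClosed_setOf_inv_mul_subset h₀c) hP
    rintro Q ⟨g, hQ⟩
    show Q.1⁻¹ * Q.1 ⊆ _
    rw [hQ, Set.inv_mul_smul_set_self]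
  refine ⟨hsub, ⟨h₀c.of_subset_of_discreteTopology hsub, .of_subset h₀d hsub⟩, ?_⟩
  intro p hp
  calc p⁻¹ • P.1 ⊆ (P.1)⁻¹ * P.1 := Set.smul_set_subset_mul (Set.inv_mem_inv.mpr hp)
    _ ⊆ P₀⁻¹ * P₀ := hsub
    _ ⊆ Subgroup.closure P₀ := P₀.inv_mul_subset_subgroupClosure
end

section
/- Let G, H be locally compact second countable groups, Γ ⊆ G × H a discrete subgroup, K ⊆ G compact, and W₀ ⊆ H compact. Let h ∈ H and (h_n) a sequence in H with h_n → h. Assume each translated window h_n W₀ and hW₀ is Γ-regular, i.e. (G × h_n ∂W₀) ∩ Γ = ∅ and (G × h ∂W₀) ∩ Γ = ∅. Then there exists n₀ such that for all n ≥ n₀: (K × h_n W₀) ∩ Γ = (K × h W₀) ∩ Γ. -/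
open Pointwise Topology Filter

/-!
Every point `γ` of `Γ` lies off the frontier of `hW₀`, so membership of `γ` in `K × hₙW₀` is
eventually the same as in `K × hW₀`. All the windows `hₙW₀`, `hW₀` lie in the compact set
`{h, h₁, h₂, …} W₀`, and a discrete subgroup meets a compact set in finitely many points, so only
finitely many `γ` are involved and the stabilization is uniform.
-/

lemma eventually_mem_iff_of_notMem_frontier {X : Type*} [TopologicalSpace X] {s : Set X} {x : X}
    (hx : x ∉ frontier s) : ∀ᶠ z in 𝓝 x, (z ∈ s ↔ x ∈ s) := by
  rw [← Set.mem_compl_iff, compl_frontier_eq_union_interior] at hx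
  rcases hx with hx | hx
  · filter_upwards [mem_interior_iff_mem_nhds.1 hx] with z hz
    exact iff_of_true hz (interior_subset hx)
  · filter_upwards [mem_interior_iff_mem_nhds.1 hx] with z hz
    exact iff_of_false hz (interior_subset hx)

lemma Filter.Tendsto.eventually_mem_smul_set_iff {ι H X : Type*} [Group H] [TopologicalSpace H]
    [ContinuousInv H] [MulAction H X] [TopologicalSpace X] [ContinuousSMul H X]
    {l : Filter ι} {g : ι → H} {a : H} (hg : Tendsto g l (𝓝 a)) {s : Set X} {y : X}
    (hy : y ∉ a • frontier s) : ∀ᶠ i in l, (y ∈ g i • s ↔ y ∈ a • s) := by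
  simp only [Set.mem_smul_set_iff_inv_smul_mem] at hy ⊢
  exact (hg.inv.smul_const y).eventually (eventually_mem_iff_of_notMem_frontier hy)

lemma Subgroup.exists_mem_nhds_one_eq_one_of_mem {X : Type*} [Group X] [TopologicalSpace X]
    (Γ : Subgroup X) [DiscreteTopology Γ] : ∃ U ∈ 𝓝 (1 : X), ∀ x ∈ Γ, x ∈ U → x = 1 := by
  obtain ⟨U, hU, hUΓ⟩ :=
    (mem_nhds_subtype _ _ _).1 (isOpen_discrete ({1} : Set Γ) |>.mem_nhds rfl)
  exact ⟨U, hU, fun x hxΓ hxU => congrArg Subtype.val (hUΓ (a := ⟨x, hxΓ⟩) hxU)⟩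

lemma IsCompact.finite_inter_subgroup {X : Type*} [Group X] [TopologicalSpace X]
    [IsTopologicalGroup X] {C : Set X} (hC : IsCompact C) (Γ : Subgroup X) [DiscreteTopology Γ] :
    (C ∩ Γ).Finite := by
  obtain ⟨U, hU, hUΓ⟩ := Γ.exists_mem_nhds_one_eq_one_of_mem
  obtain ⟨V, hV, hVU⟩ := exists_nhds_split_inv hU
  -- Each right translate `V x` meets `Γ` at most once, and finitely many of them cover `C`.
  have hVx : ∀ x : X, {y | y / x ∈ V} ∈ 𝓝 x := fun x =>
    (continuous_div_right' x).continuousAt.preimage_mem_nhds (by rwa [div_self'])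
  obtain ⟨t, -, hcover⟩ := hC.elim_nhds_subcover _ fun x _ => hVx x
  refine (t.finite_toSet.biUnion fun x _ => Set.Subsingleton.finite (s := {y | y / x ∈ V} ∩ Γ)
    ?_).subset ?_
  · rintro a ⟨ha, haΓ⟩ b ⟨hb, hbΓ⟩
    rw [← div_eq_one]
    exact hUΓ _ (div_mem haΓ hbΓ) (div_div_div_cancel_right a b x ▸ hVU _ ha _ hb)
  · rintro y ⟨hyC, hyΓ⟩
    obtain ⟨x, hx, hyx⟩ := Set.mem_iUnion₂.1 (hcover hyC)
    exact Set.mem_iUnion₂.2 ⟨x, hx, hyx, hyΓ⟩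

lemma Set.Finite.eventually_eq_of_forall_subset {α ι : Type*} {l : Filter ι} {F : Set α}
    (hF : F.Finite) {u : ι → Set α} {v : Set α} (hu : ∀ i, u i ⊆ F) (hv : v ⊆ F)
    (huv : ∀ x ∈ F, ∀ᶠ i in l, (x ∈ u i ↔ x ∈ v)) : ∀ᶠ i in l, u i = v := by
  filter_upwards [hF.eventually_all.2 huv] with i hi
  ext x
  exact ⟨fun hx => (hi x (hu i hx)).1 hx, fun hx => (hi x (hv hx)).2 hx⟩

theorem window_intersection_stabilizes_general
    {G H : Type*} [Group G] [TopologicalSpace G] [IsTopologicalGroup G]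
    [Group H] [TopologicalSpace H] [IsTopologicalGroup H]
    (Γ : Subgroup (G × H)) (hΓ : DiscreteTopology ↥Γ)
    (K : Set G) (hK : IsCompact K)
    (W₀ : Set H) (hW : IsCompact W₀)
    (h : H) (hn : ℕ → H) (hconv : Filter.Tendsto hn Filter.atTop (𝓝 h))
    (hreg' : ((Set.univ : Set G) ×ˢ (h • frontier W₀)) ∩ (Γ : Set (G × H)) = ∅) :
    ∃ n₀ : ℕ, ∀ n ≥ n₀,
      (K ×ˢ (hn n • W₀)) ∩ (Γ : Set (G × H))
        = (K ×ˢ (h • W₀)) ∩ (Γ : Set (G × H)) := by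
  set L : Set H := insert h (Set.range hn) * W₀
  have hL : IsCompact L := hconv.isCompact_insert_range.mul hW
  have hF : (K ×ˢ L ∩ Γ).Finite := (hK.prod hL).finite_inter_subgroup Γ
  have hsub : ∀ a ∈ insert h (Set.range hn), K ×ˢ (a • W₀) ∩ Γ ⊆ K ×ˢ L ∩ Γ := fun a ha =>
    Set.inter_subset_inter_left _ (Set.prod_mono le_rfl (Set.smul_set_subset_smul ha))
  refine eventually_atTop.1 (hF.eventually_eq_of_forall_subset
    (fun n => hsub _ (Set.mem_insert_of_mem _ ⟨n, rfl⟩)) (hsub _ (Set.mem_insert _ _)) ?_)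
  rintro ⟨g, y⟩ ⟨⟨hg, -⟩, hγ⟩
  have hy : y ∉ h • frontier W₀ := fun hy =>
    (Set.eq_empty_iff_forall_notMem.1 hreg') (g, y) ⟨⟨trivial, hy⟩, hγ⟩
  filter_upwards [hconv.eventually_mem_smul_set_iff hy] with n hmem
  simp only [Set.mem_inter_iff, Set.mem_prod, hg, true_and, hmem, SetLike.mem_coe]

/-- Let `Γ ≤ G × H` be a discrete subgroup, `K ⊆ G` compact,
`W₀ ⊆ H` compact, and `h_n → h` in `H`. If all translated windows `h_n W₀` and `hW₀`
are `Γ`-regular (their boundaries meet no point of `Γ`), then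
`(K × h_n W₀) ∩ Γ = (K × hW₀) ∩ Γ` for all sufficiently large `n`. -/
theorem window_intersection_stabilizes
    {G H : Type*} [Group G] [TopologicalSpace G] [IsTopologicalGroup G]
    [LocallyCompactSpace G] [SecondCountableTopology G]
    [Group H] [TopologicalSpace H] [IsTopologicalGroup H]
    [LocallyCompactSpace H] [SecondCountableTopology H]
    (Γ : Subgroup (G × H)) (hΓ : DiscreteTopology ↥Γ)
    (K : Set G) (hK : IsCompact K)
    (W₀ : Set H) (hW : IsCompact W₀)
    (h : H) (hn : ℕ → H) (hconv : Filter.Tendsto hn Filter.atTop (𝓝 h))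
    (hreg : ∀ n : ℕ,
      ((Set.univ : Set G) ×ˢ (hn n • frontier W₀)) ∩ (Γ : Set (G × H)) = ∅)
    (hreg' : ((Set.univ : Set G) ×ˢ (h • frontier W₀)) ∩ (Γ : Set (G × H)) = ∅) :
    ∃ n₀ : ℕ, ∀ n ≥ n₀,
      (K ×ˢ (hn n • W₀)) ∩ (Γ : Set (G × H))
        = (K ×ˢ (h • W₀)) ∩ (Γ : Set (G × H)) :=
  window_intersection_stabilizes_general Γ hΓ K hK W₀ hW h hn hconv hreg'
end

section
/- Let G be a locally compact second countable group with left Haar measure m_G, fix a proper left-invariant compatible metric on G with open balls B_δ around the identity, and let P₀ ⊆ G be a set of finite local complexity. Suppose the periodization map 𝒫 satisfies M_δ := sup over locally finite Q in the hull of P₀ of Σ_{x∈Q} ρ(x) < ∞ for some nonnegative continuous ρ supported in B_δ with ∫ ρ dm_G = 1. Then for every compact L ⊆ G one has |P₀ ∩ L_{-δ}| ≤ M_δ · m_G(L), where L_{-δ} = ∩_{t ∈ B_δ} Lt. -/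
open Pointwise Topology Filter MeasureTheory

variable (G : Type*) [Group G] [TopologicalSpace G] [IsTopologicalGroup G]

/-!
Each `x ∈ P₀ ∩ L_{-δ}` contributes `1 = ∫ ρ(s⁻¹x) ds` and the bump `s ↦ ρ(s⁻¹x)` lives in `L`.
Summing over `x` and exchanging sum and integral gives
`|P₀ ∩ L_{-δ}| = ∫_L Σ_x ρ(s⁻¹x) ds`, and for each `s` the inner sum is at most the
periodization of `ρ` at the translate `s⁻¹P₀`, which lies in the hull, hence at most `M`.
-/

section Shrink

variable {G : Type*} [Group G]

theorem mul_inv_mem_of_mem_iInter_image_mul {L B : Set G} {x t : G}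
    (hx : x ∈ ⋂ t ∈ B, (fun y => y * t) '' L) (ht : t ∈ B) : x * t⁻¹ ∈ L := by
  obtain ⟨l, hl, rfl⟩ := Set.mem_iInter₂.1 hx t ht
  simpa using hl

theorem support_comp_inv_mul_subset {M : Type*} [Zero M] {f : G → M} {L B : Set G} {x : G}
    (hf : Function.support f ⊆ B) (hx : x ∈ ⋂ t ∈ B, (fun y => y * t) '' L) :
    Function.support (fun s => f (s⁻¹ * x)) ⊆ L := fun s hs => by
  simpa using mul_inv_mem_of_mem_iInter_image_mul hx (hf hs)

end Shrink

section Sums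

variable {α M : Type*} [AddCommMonoid M] [PartialOrder M] [IsOrderedAddMonoid M]

theorem Finset.sum_le_finsum_mem {f : α → M} (hf : ∀ x, 0 ≤ f x) {s : Finset α} {t : Set α}
    (hst : ↑s ⊆ t) (ht : (t ∩ Function.support f).Finite) :
    ∑ x ∈ s, f x ≤ ∑ᶠ x ∈ t, f x := by
  classical
  rw [finsum_mem_eq_sum f ht, ← Finset.sum_filter_ne_zero]
  refine Finset.sum_le_sum_of_subset_of_nonneg (fun x hx => ?_) fun x _ _ => hf x
  rw [Finset.mem_filter] at hx
  exact ht.mem_toFinset.2 ⟨hst hx.1, hx.2⟩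

theorem Finset.sum_comp_mul_le_finsum_mem_smul {G : Type*} [Group G] {f : G → M}
    (hf : ∀ x, 0 ≤ f x) {s : Finset G} {P : Set G} (hsP : ↑s ⊆ P) (g : G)
    (hfin : (g • P ∩ Function.support f).Finite) :
    ∑ x ∈ s, f (g * x) ≤ ∑ᶠ x ∈ g • P, f x := by
  refine (Finset.sum_map s (mulLeftEmbedding g) f).symm.trans_le
    (Finset.sum_le_finsum_mem hf ?_ hfin)
  rw [Finset.coe_map]
  exact Set.image_mono hsP

end Sums

section Integral

variable {G : Type*} [Group G] [MeasurableSpace G]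

theorem integral_comp_inv_mul [MeasurableMul G] [MeasurableInv G] {E : Type*}
    [NormedAddCommGroup E] [NormedSpace ℝ E] (μ : Measure G) [μ.IsInvInvariant]
    [μ.IsMulRightInvariant] (f : G → E) (x : G) :
    ∫ s, f (s⁻¹ * x) ∂μ = ∫ s, f s ∂μ := by
  rw [integral_inv_eq_self (fun s => f (s * x)) μ, integral_mul_right_eq_self f x]

variable [TopologicalSpace G] [IsTopologicalGroup G] [BorelSpace G]

theorem card_le_mul_measureReal_of_sum_translates_le (μ : Measure G)
    [IsFiniteMeasureOnCompacts μ] [μ.IsInvInvariant] [μ.IsMulRightInvariant]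
    {ρ : G → ℝ} (hρc : Continuous ρ) (hρint : ∫ s, ρ s ∂μ = 1) {F : Finset G} {L : Set G}
    (hL : IsCompact L) (hsupp : ∀ x ∈ F, Function.support (fun s => ρ (s⁻¹ * x)) ⊆ L)
    {M : ℝ} (hsum : ∀ s, ∑ x ∈ F, ρ (s⁻¹ * x) ≤ M) :
    (F.card : ℝ) ≤ M * μ.real L := by
  have hint : ∀ x ∈ F, Integrable (fun s => ρ (s⁻¹ * x)) μ := fun x hx =>
    (hρc.comp (continuous_inv.mul continuous_const)).integrable_of_hasCompactSupport
      (hL.closure_of_subset (hsupp x hx))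
  have hvanish : ∀ s ∉ L, ∑ x ∈ F, ρ (s⁻¹ * x) = 0 := fun s hs =>
    Finset.sum_eq_zero fun x hx => Function.notMem_support.1 fun h => hs (hsupp x hx h)
  calc (F.card : ℝ) = ∑ x ∈ F, ∫ s, ρ (s⁻¹ * x) ∂μ := by
        simp [integral_comp_inv_mul μ ρ, hρint]
    _ = ∫ s in L, ∑ x ∈ F, ρ (s⁻¹ * x) ∂μ := by
        rw [setIntegral_eq_integral_of_forall_compl_eq_zero hvanish, integral_finsetSum F hint]
    _ ≤ ∫ _ in L, M ∂μ :=
        setIntegral_mono (integrable_finsetSum F hint).integrableOn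
          (integrableOn_const hL.measure_lt_top.ne) hsum
    _ = M * μ.real L := by rw [setIntegral_const, smul_eq_mul, mul_comm]

end Integral

theorem smul_mem_closure_orbit {G : Type*} [Group G] [TopologicalSpace G] [IsTopologicalGroup G]
    {P : Set G} (hP : IsClosed P) (g : G) :
    (⟨g • P, hP.smul g⟩ : ClosedSets G) ∈
      @closure _ (chabautyFell G) {Q : ClosedSets G | ∃ g : G, Q.1 = g • P} :=
  @subset_closure _ (chabautyFell G) _ _ ⟨g, rfl⟩

theorem card_bound_in_shrunken_set
    [MeasurableSpace G] [BorelSpace G]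
    (mG : Measure G) [mG.IsHaarMeasure] [mG.IsInvInvariant] [mG.IsMulRightInvariant]
    (P₀ : Set G) (hP₀c : IsClosed P₀) (hP₀d : DiscreteTopology ↥P₀)
    (B : Set G) (hB : B ∈ 𝓝 (1 : G))
    (ρ : G → ℝ) (hρc : Continuous ρ) (hρ0 : ∀ x, 0 ≤ ρ x)
    (hρsupp : tsupport ρ ⊆ B) (hρint : ∫ x, ρ x ∂mG = 1)
    (M : ℝ)
    (hM : ∀ Q ∈ @closure _ (chabautyFell G) {Q : ClosedSets G | ∃ g : G, Q.1 = g • P₀},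
      (Q.1 ∩ tsupport ρ).Finite ∧ ∑ᶠ x ∈ Q.1, ρ x ≤ M) :
    ∀ L : Set G, IsCompact L →
      (P₀ ∩ ⋂ t ∈ B, (fun x => x * t) '' L).Finite ∧
      ((P₀ ∩ ⋂ t ∈ B, (fun x => x * t) '' L).ncard : ℝ) ≤ M * (mG L).toReal := by
  intro L hL
  set F := P₀ ∩ ⋂ t ∈ B, (fun x => x * t) '' L
  have hFL : F ⊆ L ∩ P₀ := fun x hx =>
    ⟨by simpa using mul_inv_mem_of_mem_iInter_image_mul hx.2 (mem_of_mem_nhds hB), hx.1⟩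
  have hFfin : F.Finite :=
    ((hL.inter_right hP₀c).finite ⟨.of_subset hP₀d Set.inter_subset_right⟩).subset hFL
  refine ⟨hFfin, ?_⟩
  rw [Set.ncard_eq_toFinset_card F hFfin, ← measureReal_def]
  refine card_le_mul_measureReal_of_sum_translates_le mG hρc hρint hL
    (fun x hx => support_comp_inv_mul_subset ((subset_tsupport ρ).trans hρsupp)
      (hFfin.mem_toFinset.1 hx).2) fun s => ?_
  obtain ⟨hfin, hle⟩ := hM _ (smul_mem_closure_orbit hP₀c s⁻¹)
  exact (Finset.sum_comp_mul_le_finsum_mem_smul hρ0 (by simp [F]) s⁻¹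
    (hfin.subset (Set.inter_subset_inter_right _ (subset_tsupport ρ)))).trans hle
end

section
/- Let G be a locally compact second countable group and (F_t) a weakly admissible sequence of compact subsets of G: each F_t has positive Haar measure and there exist continuous α, β : [0,1) → ℝ₊ with α(0) = β(0) = 0 such that (F_t)_δ ⊆ F_{t+α(δ)} and sup_s m_G(F_{s+δ})/m_G(F_s) = 1 + β(δ) for all t, δ > 0. Let P₀ ⊆ G be locally finite and suppose there exists δ > 0 and M_δ with |P₀ ∩ L_{-δ}| ≤ M_δ · m_G(L) for every compact L. Then sup_t |P₀ ∩ F_t| / m_G(F_t) < ∞. -/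
open Pointwise Topology Filter MeasureTheory

/-!
Points of `P₀` in `F_t` lie in `L_{-δ}` for `L = F_{t+α(δ)}`, because `F_t · B_δ ⊆ F_{t+α(δ)}`
and `B_δ` is symmetric; hence `|P₀ ∩ F_t| ≤ M_δ · m_G(F_{t+α(δ)})`. Cutting the shift `α(δ)`
into `n` steps of length `h < 1` and applying the growth bound `n` times gives
`m_G(F_{t+α(δ)}) ≤ (1 + β(h))ⁿ · m_G(F_t)`, with a constant independent of `t`.
-/

lemma le_pow_mul_of_le_mul_shift {f : ℝ → ENNReal} {c : ENNReal} {h : ℝ}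
    (hf : ∀ s, f (s + h) ≤ c * f s) (s : ℝ) (n : ℕ) : f (s + n * h) ≤ c ^ n * f s := by
  induction n with
  | zero => simp
  | succ n ih =>
    calc f (s + (n + 1 : ℕ) * h) = f (s + n * h + h) := by push_cast; ring_nf
      _ ≤ c * f (s + n * h) := hf _
      _ ≤ c * (c ^ n * f s) := by gcongr
      _ = c ^ (n + 1) * f s := by rw [pow_succ', mul_assoc]

lemma exists_le_mul_shift_of_le_mul_small_shift {f : ℝ → ENNReal} {β : ℝ → ℝ}
    (hf : ∀ s δ : ℝ, 0 < δ → δ < 1 → f (s + δ) ≤ ENNReal.ofReal (1 + β δ) * f s)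
    {a : ℝ} (ha : 0 ≤ a) : ∃ K : ENNReal, K ≠ ⊤ ∧ ∀ s, f (s + a) ≤ K * f s := by
  rcases ha.eq_or_lt with rfl | ha
  · exact ⟨1, ENNReal.one_ne_top, fun s => by simp⟩
  set n := ⌊a⌋₊ + 1
  have hn : (0 : ℝ) < n := by positivity
  have hstep_pos : 0 < a / n := by positivity
  have hstep_lt : a / n < 1 := by
    rw [div_lt_one hn]
    exact_mod_cast Nat.lt_floor_add_one a
  refine ⟨ENNReal.ofReal (1 + β (a / n)) ^ n, by finiteness, fun s => ?_⟩
  have := le_pow_mul_of_le_mul_shift (fun s => hf s _ hstep_pos hstep_lt) s n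
  rwa [mul_div_cancel₀ a hn.ne'] at this

lemma dist_one_inv_eq {G : Type*} [Group G] {d : G → G → ℝ}
    (hsymm : ∀ x y : G, d x y = d y x) (hleftinv : ∀ g x y : G, d (g * x) (g * y) = d x y)
    (x : G) : d 1 x⁻¹ = d 1 x := by
  simpa [hsymm x 1] using (hleftinv x 1 x⁻¹).symm

lemma subset_iInter_image_mul_right_of_mul_inv_subset {G : Type*} [Group G] {A B L : Set G}
    (h : A * B⁻¹ ⊆ L) : A ⊆ ⋂ x ∈ B, (fun y => y * x) '' L :=
  fun p hp => Set.mem_iInter₂.2 fun x hx =>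
    ⟨p * x⁻¹, h (Set.mul_mem_mul hp (Set.inv_mem_inv.2 hx)), inv_mul_cancel_right p x⟩

lemma iInter_image_mul_right_subset_of_one_mem {G : Type*} [Group G] {B : Set G}
    (hB : (1 : G) ∈ B) (L : Set G) : ⋂ x ∈ B, (fun y => y * x) '' L ⊆ L := by
  simpa using Set.biInter_subset_of_mem (t := fun x => (fun y => y * x) '' L) hB

lemma IsCompact.finite_inter_of_isClosed_discrete {X : Type*} [TopologicalSpace X]
    {P L : Set X} (hL : IsCompact L) (hPc : IsClosed P) [DiscreteTopology P] :
    (P ∩ L).Finite :=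
  (hL.inter_left hPc).finite
    (isDiscrete_iff_discreteTopology.2 (DiscreteTopology.of_subset ‹_› Set.inter_subset_left))

theorem sup_density_finite_general
    {G : Type*} [Group G] [TopologicalSpace G]
    [MeasurableSpace G]
    (mG : Measure G) [mG.IsHaarMeasure]
    (d : G → G → ℝ)
    (hsymm : ∀ x y : G, d x y = d y x)
    (hzero : ∀ x y : G, d x y = 0 ↔ x = y)
    (hleftinv : ∀ g x y : G, d (g * x) (g * y) = d x y)
    (F : ℝ → Set G) (hFc : ∀ t : ℝ, IsCompact (F t))
    (α β : ℝ → ℝ)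
    (hαnn : ∀ δ : ℝ, 0 ≤ α δ)
    (hadm1 : ∀ t δ : ℝ, 0 < δ → δ < 1 →
      F t * {x : G | d 1 x < δ} ⊆ F (t + α δ))
    (hadm2 : ∀ s δ : ℝ, 0 < δ → δ < 1 →
      mG (F (s + δ)) ≤ ENNReal.ofReal (1 + β δ) * mG (F s))
    (P₀ : Set G) (hP₀c : IsClosed P₀) (hP₀d : DiscreteTopology ↥P₀)
    (δ : ℝ) (hδ : 0 < δ) (hδ1 : δ < 1) (M : ℝ)
    (hM : ∀ L : Set G, IsCompact L →
      ((P₀ ∩ ⋂ t ∈ {x : G | d 1 x < δ}, (fun y => y * t) '' L).ncard : ℝ)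
        ≤ M * (mG L).toReal) :
    ∃ C : ℝ, ∀ t : ℝ, 0 < t → ((P₀ ∩ F t).ncard : ℝ) ≤ C * (mG (F t)).toReal := by
  obtain ⟨K, hK, hKF⟩ :=
    exists_le_mul_shift_of_le_mul_small_shift (f := fun s => mG (F s)) hadm2 (hαnn δ)
  refine ⟨max M 0 * K.toReal, fun t _ => ?_⟩
  set B := {x : G | d 1 x < δ}
  set L := F (t + α δ)
  have hB_inv : B⁻¹ = B := by ext x; simp [B, dist_one_inv_eq hsymm hleftinv]
  have hF_shrunk : F t ⊆ ⋂ x ∈ B, (fun y => y * x) '' L :=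
    subset_iInter_image_mul_right_of_mul_inv_subset (by rw [hB_inv]; exact hadm1 t δ hδ hδ1)
  have hfin : (P₀ ∩ ⋂ x ∈ B, (fun y => y * x) '' L).Finite :=
    ((hFc _).finite_inter_of_isClosed_discrete hP₀c).subset <| Set.inter_subset_inter_right _ <|
      iInter_image_mul_right_subset_of_one_mem (by simp [B, (hzero 1 1).2 rfl, hδ]) L
  have hL : (mG L).toReal ≤ K.toReal * (mG (F t)).toReal := by
    rw [← ENNReal.toReal_mul]
    exact ENNReal.toReal_mono (ENNReal.mul_ne_top hK (hFc t).measure_lt_top.ne) (hKF t)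
  calc ((P₀ ∩ F t).ncard : ℝ)
      ≤ (P₀ ∩ ⋂ x ∈ B, (fun y => y * x) '' L).ncard := by
        exact_mod_cast Set.ncard_le_ncard (Set.inter_subset_inter_right _ hF_shrunk) hfin
    _ ≤ M * (mG L).toReal := hM L (hFc _)
    _ ≤ max M 0 * (mG L).toReal := by gcongr; exact le_max_left M 0
    _ ≤ max M 0 * K.toReal * (mG (F t)).toReal := by
        rw [mul_assoc]; gcongr

/-- Let `(F_t)` be a weakly admissible family of compact subsets of a
lcsc group `G` (with respect to balls `B_δ = {x | d(1,x) < δ}` of an admissible metric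
`d`), i.e. each `F_t` has positive Haar measure and there are continuous
`α, β : [0,1) → ℝ₊` vanishing at `0` with `(F_t)_δ ⊆ F_{t+α(δ)}` and
`m_G(F_{s+δ}) ≤ (1+β(δ)) m_G(F_s)`. If `P₀` is locally finite and
`|P₀ ∩ L_{-δ}| ≤ M · m_G(L)` for some `δ ∈ (0,1)`, `M` and all compact `L`, then
`sup_t |P₀ ∩ F_t| / m_G(F_t) < ∞`. -/
theorem sup_density_finite
    {G : Type*} [Group G] [TopologicalSpace G] [IsTopologicalGroup G]
    [LocallyCompactSpace G] [SecondCountableTopology G]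
    [MeasurableSpace G] [BorelSpace G]
    (mG : Measure G) [mG.IsHaarMeasure]
    (d : G → G → ℝ)
    (hsymm : ∀ x y : G, d x y = d y x)
    (hzero : ∀ x y : G, d x y = 0 ↔ x = y)
    (htri : ∀ x y z : G, d x z ≤ d x y + d y z)
    (hleftinv : ∀ g x y : G, d (g * x) (g * y) = d x y)
    (hproper : ∀ (x : G) (R : ℝ), IsCompact {y : G | d x y ≤ R})
    (hcompat : ∀ x : G, (nhds x).HasBasis (fun r : ℝ => 0 < r)
      (fun r => {y : G | d x y < r}))
    (F : ℝ → Set G) (hFc : ∀ t : ℝ, IsCompact (F t)) (hFpos : ∀ t : ℝ, 0 < mG (F t))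
    (α β : ℝ → ℝ)
    (hαc : ContinuousOn α (Set.Ico 0 1)) (hβc : ContinuousOn β (Set.Ico 0 1))
    (hα0 : α 0 = 0) (hβ0 : β 0 = 0)
    (hαnn : ∀ δ : ℝ, 0 ≤ α δ) (hβnn : ∀ δ : ℝ, 0 ≤ β δ)
    (hadm1 : ∀ t δ : ℝ, 0 < δ → δ < 1 →
      F t * {x : G | d 1 x < δ} ⊆ F (t + α δ))
    (hadm2 : ∀ s δ : ℝ, 0 < δ → δ < 1 →
      mG (F (s + δ)) ≤ ENNReal.ofReal (1 + β δ) * mG (F s))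
    (P₀ : Set G) (hP₀c : IsClosed P₀) (hP₀d : DiscreteTopology ↥P₀)
    (δ : ℝ) (hδ : 0 < δ) (hδ1 : δ < 1) (M : ℝ)
    (hM : ∀ L : Set G, IsCompact L →
      ((P₀ ∩ ⋂ t ∈ {x : G | d 1 x < δ}, (fun y => y * t) '' L).ncard : ℝ)
        ≤ M * (mG L).toReal) :
    ∃ C : ℝ, ∀ t : ℝ, 0 < t → ((P₀ ∩ F t).ncard : ℝ) ≤ C * (mG (F t)).toReal :=
  sup_density_finite_general mG d hsymm hzero hleftinv F hFc α β hαnn hadm1 hadm2 P₀ hP₀c hP₀d δ hδ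
    hδ1 M hM
end
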